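/- If A is a normalized weak Hadamard matrix (first column the all-ones vector), then H_2 ⊗ A is a normalized weak Hadamard matrix, where H_2 = [[1,1],[1,-1]]. -/

import Mathlib

/-! `H₂ᵀ H₂ = 2 I`, so `(H₂ ⊗ A)ᵀ (H₂ ⊗ A) = (H₂ᵀ H₂) ⊗ (Aᵀ A) = 2 I ⊗ Aᵀ A` is block diagonal with
blocks `2 Aᵀ A`. Its entries outside the diagonal blocks vanish outright, and inside a block the
ordering `(a, b) ↦ a * n + b` compares indices exactly as the ordering of `A` does, so tridiagonality
is inherited. Entries stay in `{-1, 0, 1}` because that set is closed under multiplication, and the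
first column of `H₂ ⊗ A` is the product of the first columns of `H₂` and `A`. -/

open Matrix Kronecker

/-- A tridiagonality predicate with respect to the natural linear ordering. -/
def TridiagFin {N : ℕ} (M : Matrix (Fin N) (Fin N) ℝ) : Prop :=
  ∀ i j : Fin N, ((i : ℕ) + 1 < (j : ℕ) ∨ (j : ℕ) + 1 < (i : ℕ)) → M i j = 0

/-- The `2 × 2` Hadamard matrix. -/
def H2 : Matrix (Fin 2) (Fin 2) ℝ := !![1, 1; 1, -1]

lemma mul_eq_neg_one_or_zero_or_one {R : Type*} [Ring R] {a b : R}
    (ha : a = -1 ∨ a = 0 ∨ a = 1) (hb : b = -1 ∨ b = 0 ∨ b = 1) :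
    a * b = -1 ∨ a * b = 0 ∨ a * b = 1 := by
  rcases ha with rfl | rfl | rfl <;> rcases hb with rfl | rfl | rfl <;> simp

lemma kronecker_apply_eq_neg_one_or_zero_or_one {R l m n o : Type*} [Ring R]
    {B : Matrix l m R} {A : Matrix n o R}
    (hB : ∀ i j, B i j = -1 ∨ B i j = 0 ∨ B i j = 1)
    (hA : ∀ i j, A i j = -1 ∨ A i j = 0 ∨ A i j = 1) (p : l × n) (q : m × o) :
    (B ⊗ₖ A) p q = -1 ∨ (B ⊗ₖ A) p q = 0 ∨ (B ⊗ₖ A) p q = 1 :=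
  mul_eq_neg_one_or_zero_or_one (hB p.1 q.1) (hA p.2 q.2)

lemma Matrix.IsDiag.kronecker_apply_eq_zero_of_tridiagFin {m n : ℕ} {D : Matrix (Fin m) (Fin m) ℝ}
    (hD : D.IsDiag) {M : Matrix (Fin n) (Fin n) ℝ} (hM : TridiagFin M) (p q : Fin m × Fin n)
    (hpq : (p.1 : ℕ) * n + (p.2 : ℕ) + 1 < (q.1 : ℕ) * n + (q.2 : ℕ) ∨
      (q.1 : ℕ) * n + (q.2 : ℕ) + 1 < (p.1 : ℕ) * n + (p.2 : ℕ)) :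
    (D ⊗ₖ M) p q = 0 := by
  obtain ⟨a, b⟩ := p
  obtain ⟨c, d⟩ := q
  rw [kroneckerMap_apply]
  by_cases hac : a = c
  · subst hac
    dsimp only at hpq
    have hbd : (b : ℕ) + 1 < (d : ℕ) ∨ (d : ℕ) + 1 < (b : ℕ) := by omega
    rw [hM b d hbd, mul_zero]
  · rw [hD hac, zero_mul]

lemma H2_transpose_mul_self : H2ᵀ * H2 = (2 : ℝ) • (1 : Matrix (Fin 2) (Fin 2) ℝ) := by
  ext i j
  fin_cases i <;> fin_cases j <;> simp [H2, mul_apply, Fin.sum_univ_two] <;> norm_num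

lemma H2_apply_eq_neg_one_or_zero_or_one (i j : Fin 2) :
    H2 i j = -1 ∨ H2 i j = 0 ∨ H2 i j = 1 := by
  fin_cases i <;> fin_cases j <;> simp [H2]

lemma H2_apply_zero (i : Fin 2) : H2 i 0 = 1 := by
  fin_cases i <;> simp [H2]

/-- If `A` is a normalized weak Hadamard matrix (first column all ones), then
`H₂ ⊗ A` is a normalized weak Hadamard matrix
(tridiagonality with respect to the ordering `(a, b) ↦ a * n + b`). -/
theorem H2_kronecker_normalized_weak_hadamard {n : ℕ} (hn : 0 < n)
    (A : Matrix (Fin n) (Fin n) ℝ)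
    (hAent : ∀ i j, A i j = -1 ∨ A i j = 0 ∨ A i j = 1)
    (hAtri : TridiagFin (Aᵀ * A))
    (hAnorm : ∀ i, A i ⟨0, hn⟩ = 1) :
    (∀ p q, (H2 ⊗ₖ A) p q = -1 ∨ (H2 ⊗ₖ A) p q = 0 ∨ (H2 ⊗ₖ A) p q = 1) ∧
      (∀ p q : Fin 2 × Fin n,
        ((p.1 : ℕ) * n + (p.2 : ℕ) + 1 < (q.1 : ℕ) * n + (q.2 : ℕ) ∨
          (q.1 : ℕ) * n + (q.2 : ℕ) + 1 < (p.1 : ℕ) * n + (p.2 : ℕ)) →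
        ((H2 ⊗ₖ A)ᵀ * (H2 ⊗ₖ A)) p q = 0) ∧
      (∀ p, (H2 ⊗ₖ A) p ((0 : Fin 2), (⟨0, hn⟩ : Fin n)) = 1) := by
  have hGram : (H2 ⊗ₖ A)ᵀ * (H2 ⊗ₖ A) = (H2ᵀ * H2) ⊗ₖ (Aᵀ * A) := by
    rw [mul_kronecker_mul, kroneckerMap_transpose]
  have hDiag : (H2ᵀ * H2).IsDiag := H2_transpose_mul_self ▸ isDiag_smul_one _ _
  refine ⟨kronecker_apply_eq_neg_one_or_zero_or_one H2_apply_eq_neg_one_or_zero_or_one hAent,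
    fun p q hpq => hGram ▸ hDiag.kronecker_apply_eq_zero_of_tridiagFin hAtri p q hpq,
    fun p => ?_⟩
  rw [kroneckerMap_apply, H2_apply_zero, hAnorm, mul_one]
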